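/- arXiv:1909.02421 — 2 statements merged into one kernel-verified Lean document; each statement's English description precedes it below -/
import Mathlib

section
/- For every k ≥ 3, consider the k-swap game with exactly two strategic agents of each of the k types (n = 2k) whose topology consists of a cycle α₁, …, α_k where each αℓ is additionally joined to a pendant node βℓ. The assignment v placing an agent of type T_ℓ at αℓ and an agent of type T_{ℓ+1 mod k} at βℓ is an equilibrium with SW(v) = 0, whereas the assignment v* placing both agents of type T_ℓ at αℓ and βℓ satisfies SW(v*) > 0. Hence the social price of anarchy of k-swap games is unbounded for every k ≥ 3, even with an equal number of strategic agents per type. -/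
open Finset

namespace SwapGame

/-- Build a simple graph from a (not necessarily symmetric) boolean relation
by symmetrizing it and removing loops. -/
def mkGraph {V : Type*} (r : V → V → Bool) : SimpleGraph V where
  Adj a b := a ≠ b ∧ (r a b ∨ r b a)
  symm := ⟨fun a b h => ⟨Ne.symm h.1, Or.symm h.2⟩⟩
  loopless := ⟨fun a h => h.1 rfl⟩

instance mkGraph.instDecidableRel {V : Type*} [DecidableEq V] (r : V → V → Bool) :
    DecidableRel (mkGraph r).Adj :=
  fun a b => inferInstanceAs (Decidable (a ≠ b ∧ (r a b ∨ r b a)))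

variable {A V K : Type*} [Fintype V] [DecidableEq A] [DecidableEq V] [DecidableEq K]

/-- The assignment obtained from `σ` by swapping the locations of agents `i` and `j`. -/
def swapA (σ : A ≃ V) (i j : A) : A ≃ V := (Equiv.swap i j).trans σ

/-- The utility of agent `i` under assignment `σ`: the fraction of the neighbors of the
node of `i` that are occupied by agents of the same type (friends of `i`). -/
def util (G : SimpleGraph V) [DecidableRel G.Adj] (c : A → K) (σ : A ≃ V) (i : A) : ℚ :=
  (((G.neighborFinset (σ i)).filter (fun w => c (σ.symm w) = c i)).card : ℚ) /
    ((G.neighborFinset (σ i)).card : ℚ)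

/-- Agents `i` and `j` both strictly increase their utility by swapping their locations. -/
def improving (G : SimpleGraph V) [DecidableRel G.Adj] (c : A → K) (σ : A ≃ V)
    (i j : A) : Prop :=
  util G c σ i < util G c (swapA σ i j) i ∧ util G c σ j < util G c (swapA σ i j) j

/-- An assignment is an equilibrium if no pair of agents can both strictly increase
their utility by swapping positions. -/
def isEquilibrium (G : SimpleGraph V) [DecidableRel G.Adj] (c : A → K) (σ : A ≃ V) : Prop :=
  ¬ ∃ i j : A, improving G c σ i j

/-- The social welfare of an assignment: the sum of the utilities of all agents. -/
def SW [Fintype A] (G : SimpleGraph V) [DecidableRel G.Adj] (c : A → K) (σ : A ≃ V) : ℚ :=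
  ∑ i : A, util G c σ i

/-- Agent `i` is exposed: at least one neighbor is occupied by an agent of another type. -/
def exposed (G : SimpleGraph V) [DecidableRel G.Adj] (c : A → K) (σ : A ≃ V) (i : A) : Prop :=
  ((G.neighborFinset (σ i)).filter (fun w => c (σ.symm w) ≠ c i)).Nonempty

instance exposed.instDecidable (G : SimpleGraph V) [DecidableRel G.Adj] (c : A → K)
    (σ : A ≃ V) : DecidablePred (exposed G c σ) :=
  fun _ => inferInstanceAs (Decidable (Finset.Nonempty _))

/-- The degree of integration of an assignment: the number of exposed agents. -/
def DI [Fintype A] (G : SimpleGraph V) [DecidableRel G.Adj] (c : A → K) (σ : A ≃ V) : ℕ :=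
  (univ.filter (fun i : A => exposed G c σ i)).card

end SwapGame

namespace SwapGame

/-- The topology: a cycle `α₁, …, α_k` (the `inl` nodes, with `αℓ ~ αℓ₊₁ (mod k)`),
where each `αℓ` is additionally joined to a pendant node `βℓ` (the `inr` nodes). -/
def adjCyc (k : ℕ) : (Fin k ⊕ Fin k) → (Fin k ⊕ Fin k) → Bool
  | .inl i, .inl j => (j : ℕ) == ((i : ℕ) + 1) % k
  | .inl i, .inr j => i == j
  | _, _ => false

abbrev GCyc (k : ℕ) : SimpleGraph (Fin k ⊕ Fin k) := mkGraph (adjCyc k)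

/-- Agents: two agents of each of the `k` types; the type of an agent is its first
component. -/
abbrev ACyc (k : ℕ) := Fin k × Fin 2

/-! In the shifted placement nobody has a friend nearby: `αℓ` sees types `ℓ ± 1` and `ℓ + 1`,
and `βℓ`, of type `ℓ + 1`, sees only `αℓ`. Starting from utility `0`, a swap of two agents of
the same type changes no utility, and a swap of agents `i`, `j` of different types helps both
only if the partner of `i` is adjacent to the node of `j` and vice versa. The partners of type
`ℓ` sit at `αℓ` and `βℓ₋₁`, so this would force `ℓ = ℓ - 2`, impossible for `k ≥ 3`. In the
segregated placement every pendant agent has utility `1`. -/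

section Utility

lemma swapA_apply {A V : Type*} [DecidableEq A] (σ : A ≃ V) (i j f : A) :
    swapA σ i j f = σ (Equiv.swap i j f) := rfl

lemma swapA_comm {A V : Type*} [DecidableEq A] (σ : A ≃ V) (i j : A) :
    swapA σ i j = swapA σ j i := by
  rw [swapA, swapA, Equiv.swap_comm]

variable {A V K : Type*} [Fintype V] [DecidableEq K]
  {G : SimpleGraph V} [DecidableRel G.Adj] {c : A → K} {σ : A ≃ V}

lemma util_nonneg (i : A) : 0 ≤ util G c σ i :=
  div_nonneg (Nat.cast_nonneg _) (Nat.cast_nonneg _)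

lemma util_pos_iff {i : A} : 0 < util G c σ i ↔ ∃ f, G.Adj (σ i) (σ f) ∧ c f = c i := by
  have hle := card_filter_le (G.neighborFinset (σ i)) (fun w => c (σ.symm w) = c i)
  have hfriend : (∃ f, G.Adj (σ i) (σ f) ∧ c f = c i) ↔
      ((G.neighborFinset (σ i)).filter (fun w => c (σ.symm w) = c i)).Nonempty := by
    simp only [Finset.Nonempty, mem_filter, SimpleGraph.mem_neighborFinset]
    exact ⟨fun ⟨f, hf⟩ => ⟨σ f, by simpa using hf⟩, fun ⟨w, hw⟩ => ⟨σ.symm w, by simpa using hw⟩⟩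
  rw [hfriend, ← card_pos, util, div_pos_iff]
  constructor
  · rintro (⟨ha, -⟩ | ⟨ha, -⟩)
    · exact_mod_cast ha
    · exact absurd ha (Nat.cast_nonneg _).not_gt
  · intro ha
    exact Or.inl ⟨by exact_mod_cast ha, by exact_mod_cast ha.trans_le hle⟩

lemma util_eq_zero_iff {i : A} : util G c σ i = 0 ↔ ∀ f, G.Adj (σ i) (σ f) → c f ≠ c i := by
  rw [← not_iff_not, ← Ne, ← (util_nonneg i).lt_iff_ne', util_pos_iff]
  push Not
  rfl

lemma SW_pos_of_util_pos [Fintype A] {i : A} (h : 0 < util G c σ i) : 0 < SW G c σ :=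
  sum_pos' (fun j _ => util_nonneg j) ⟨i, mem_univ i, h⟩

variable [DecidableEq A]

lemma util_swapA_of_eq {i j : A} (h : c i = c j) : util G c (swapA σ i j) i = util G c σ j := by
  have hc : ∀ f, c (Equiv.swap i j f) = c f := fun f => by
    rcases eq_or_ne f i with rfl | hi
    · rw [Equiv.swap_apply_left, h]
    rcases eq_or_ne f j with rfl | hj
    · rw [Equiv.swap_apply_right, h]
    · rw [Equiv.swap_apply_of_ne_of_ne hi hj]
  have hpos : swapA σ i j i = σ j := by rw [swapA_apply, Equiv.swap_apply_left]
  unfold util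
  rw [hpos]
  simp only [swapA, Equiv.symm_trans_apply, Equiv.symm_swap, hc, h]

lemma exists_friend_adj_of_util_swapA_pos {i j : A} (h : c i ≠ c j)
    (hpos : 0 < util G c (swapA σ i j) i) : ∃ f ≠ i, c f = c i ∧ G.Adj (σ j) (σ f) := by
  obtain ⟨f, hadj, hf⟩ := util_pos_iff.1 hpos
  rw [swapA_apply, swapA_apply, Equiv.swap_apply_left] at hadj
  rcases eq_or_ne f i with rfl | hi
  · rw [Equiv.swap_apply_left] at hadj
    exact absurd hadj G.irrefl
  rcases eq_or_ne f j with rfl | hj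
  · exact absurd hf.symm h
  · rw [Equiv.swap_apply_of_ne_of_ne hi hj] at hadj
    exact ⟨f, hi, hf, hadj⟩

lemma isEquilibrium_of_util_eq_zero (h0 : ∀ i, util G c σ i = 0)
    (hcross : ∀ i j f g, c i ≠ c j → f ≠ i → c f = c i → g ≠ j → c g = c j →
      G.Adj (σ j) (σ f) → ¬ G.Adj (σ i) (σ g)) :
    isEquilibrium G c σ := by
  rintro ⟨i, j, hi, hj⟩
  by_cases hc : c i = c j
  · rw [util_swapA_of_eq hc, h0, h0] at hi
    exact lt_irrefl _ hi
  rw [h0] at hi hj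
  rw [swapA_comm] at hj
  obtain ⟨f, hfi, hf, hjf⟩ := exists_friend_adj_of_util_swapA_pos hc hi
  obtain ⟨g, hgj, hg, hig⟩ := exists_friend_adj_of_util_swapA_pos (Ne.symm hc) hj
  exact hcross i j f g hc hfi hf hgj hg hjf hig

end Utility

section CycleWithPendants

variable {k : ℕ}

lemma adj_inr_iff (a : Fin k) (w : Fin k ⊕ Fin k) : (GCyc k).Adj (.inr a) w ↔ w = .inl a := by
  change _ ≠ _ ∧ (adjCyc k _ _ = true ∨ adjCyc k _ _ = true) ↔ _
  cases w <;> simp only [adjCyc] <;> simp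

lemma inl_adj_inr_iff (a b : Fin k) : (GCyc k).Adj (.inl a) (.inr b) ↔ a = b := by
  rw [SimpleGraph.adj_comm, adj_inr_iff, Sum.inl.injEq, eq_comm]

lemma not_inr_adj_inr (a b : Fin k) : ¬ (GCyc k).Adj (.inr a) (.inr b) := by
  simp [adj_inr_iff]

lemma eq_partner_of_ne {f : ACyc k} {a : Fin k} {x : Fin 2} (hne : f ≠ (a, x)) (htype : f.1 = a) :
    f = (a, x + 1) := by
  obtain ⟨b, y⟩ := f
  obtain rfl : b = a := htype
  have hy : y ≠ x := fun h => hne (by rw [h])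
  fin_cases x <;> fin_cases y <;> simp_all

-- `(ℓ, 0) ↦ αℓ` and `(ℓ, 1) ↦ βℓ`
def segregatedPlacement (k : ℕ) : ACyc k ≃ (Fin k ⊕ Fin k) :=
  (Equiv.prodComm _ _).trans ((finTwoEquiv.prodCongr (Equiv.refl _)).trans (Equiv.boolProdEquivSum _))

def shiftedPlacement (k : ℕ) [NeZero k] : ACyc k ≃ (Fin k ⊕ Fin k) :=
  (segregatedPlacement k).trans (Equiv.sumCongr (Equiv.refl _) (Equiv.subRight 1))

variable [NeZero k]

@[simp] lemma shiftedPlacement_zero (a : Fin k) : shiftedPlacement k (a, 0) = .inl a := rfl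
@[simp] lemma shiftedPlacement_one (a : Fin k) : shiftedPlacement k (a, 1) = .inr (a - 1) := rfl

lemma fin_sub_one_ne (hk : 2 ≤ k) (a : Fin k) : a - 1 ≠ a := by
  simp only [ne_eq, sub_eq_self, Fin.one_eq_zero_iff]
  omega

lemma fin_sub_one_sub_one_ne (hk : 3 ≤ k) (a : Fin k) : a - 1 - 1 ≠ a := by
  rw [sub_sub, Ne, sub_eq_self, Fin.ext_iff, Fin.val_add, Fin.val_one', Fin.val_zero,
    Nat.mod_eq_of_lt (show 1 < k by omega), Nat.mod_eq_of_lt (show 1 + 1 < k by omega)]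
  omega

lemma util_shiftedPlacement (hk : 2 ≤ k) (i : ACyc k) :
    util (GCyc k) Prod.fst (shiftedPlacement k) i = 0 := by
  rw [util_eq_zero_iff]
  rintro ⟨b, y⟩ hadj
  obtain ⟨a, x⟩ := i
  rintro rfl
  fin_cases x <;> fin_cases y <;> simp only [Fin.zero_eta, Fin.mk_one, shiftedPlacement_zero,
    shiftedPlacement_one] at hadj
  · exact (GCyc k).irrefl hadj
  · exact fin_sub_one_ne hk b ((inl_adj_inr_iff _ _).1 hadj).symm
  · exact fin_sub_one_ne hk b (Sum.inl_injective ((adj_inr_iff _ _).1 hadj)).symm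
  · exact not_inr_adj_inr _ _ hadj

lemma shiftedPlacement_not_cross (hk : 3 ≤ k) (a b : Fin k) (x y : Fin 2) :
    ¬ ((GCyc k).Adj (shiftedPlacement k (b, y)) (shiftedPlacement k (a, x + 1)) ∧
      (GCyc k).Adj (shiftedPlacement k (a, x)) (shiftedPlacement k (b, y + 1))) := by
  fin_cases x <;> fin_cases y <;> simp only [Fin.zero_eta, Fin.mk_one, zero_add, Fin.reduceAdd,
    shiftedPlacement_zero, shiftedPlacement_one, not_and]
  · intro h1 h2
    rw [inl_adj_inr_iff] at h1 h2
    exact fin_sub_one_sub_one_ne hk a (by rw [← h1, h2])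
  · exact fun h => absurd h (not_inr_adj_inr _ _)
  · exact fun _ => not_inr_adj_inr _ _
  · intro h1 h2
    rw [adj_inr_iff, Sum.inl.injEq] at h1 h2
    exact fin_sub_one_sub_one_ne hk a (by rw [← h2, h1])

lemma isEquilibrium_shiftedPlacement (hk : 3 ≤ k) :
    isEquilibrium (GCyc k) Prod.fst (shiftedPlacement k) := by
  refine isEquilibrium_of_util_eq_zero (util_shiftedPlacement (by omega)) ?_
  rintro ⟨a, x⟩ ⟨b, y⟩ f g - hfi hf hgj hg hjf hig
  rw [eq_partner_of_ne hfi hf] at hjf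
  rw [eq_partner_of_ne hgj hg] at hig
  exact shiftedPlacement_not_cross hk a b x y ⟨hjf, hig⟩

lemma SW_shiftedPlacement (hk : 2 ≤ k) : SW (GCyc k) Prod.fst (shiftedPlacement k) = 0 :=
  sum_eq_zero fun i _ => util_shiftedPlacement hk i

lemma SW_segregatedPlacement_pos : 0 < SW (GCyc k) Prod.fst (segregatedPlacement k) :=
  SW_pos_of_util_pos (i := (0, 1)) (util_pos_iff.2 ⟨(0, 0), (adj_inr_iff _ _).2 rfl, rfl⟩)

end CycleWithPendants

/-- for every `k ≥ 3`, in the `k`-swap game with two strategic agents of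
each type on the cycle-with-pendants topology, the assignment placing an agent of type
`ℓ` at `αℓ` and an agent of type `ℓ+1 (mod k)` at `βℓ` is an equilibrium with social
welfare `0`, whereas the assignment placing both agents of type `ℓ` at `αℓ` and `βℓ`
has strictly positive social welfare. Hence the social price of anarchy of `k`-swap
games is unbounded for every `k ≥ 3`, even with an equal number of strategic agents
per type. -/
theorem poa_unbounded_three_types (k : ℕ) (hk : 3 ≤ k) :
    (∃ σ : ACyc k ≃ (Fin k ⊕ Fin k),
        (∀ ℓ : Fin k, (σ.symm (Sum.inl ℓ)).1 = ℓ ∧ ((σ.symm (Sum.inr ℓ)).1 : ℕ) = ((ℓ : ℕ) + 1) % k) ∧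
        isEquilibrium (GCyc k) Prod.fst σ ∧ SW (GCyc k) Prod.fst σ = 0) ∧
    (∃ σ : ACyc k ≃ (Fin k ⊕ Fin k),
        (∀ ℓ : Fin k, (σ.symm (Sum.inl ℓ)).1 = ℓ ∧ (σ.symm (Sum.inr ℓ)).1 = ℓ) ∧
        0 < SW (GCyc k) Prod.fst σ) := by
  have : NeZero k := ⟨by omega⟩
  have hval : ∀ ℓ : Fin k, ((ℓ + 1 : Fin k) : ℕ) = (ℓ + 1) % k := fun ℓ => by
    rw [Fin.val_add, Fin.val_one', Nat.mod_eq_of_lt (show 1 < k by omega)]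
  exact ⟨⟨shiftedPlacement k, fun ℓ => ⟨rfl, hval ℓ⟩, isEquilibrium_shiftedPlacement hk,
      SW_shiftedPlacement (by omega)⟩,
    ⟨segregatedPlacement k, fun ℓ => ⟨rfl, rfl⟩, SW_segregatedPlacement_pos⟩⟩

end SwapGame
end

section
/- For every integer x ≥ 2, consider the 2-swap game with x+1 red and x blue strategic agents (n = 2x+1) on the tree with root α having two children β₁ and β₂, each with x−1 leaf children. There is an assignment with DI = n, but every equilibrium assignment v of this game has DI(v) = 2 (up to symmetry, the unique equilibrium places all red agents on α and the β₁-subtree and all blue agents on the β₂-subtree). Hence the integration price of stability of 2-swap games with only strategic agents is at least n/2. -/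
open Finset

namespace SwapGame

/-- The topology: a root `α` with two children `β₁, β₂`, each of which has `x − 1` leaf
children of its own (`n = 2x + 1` nodes). -/
inductive VI (x : ℕ) where
  | root : VI x
  | mid : Fin 2 → VI x
  | leaf : Fin 2 → Fin (x - 1) → VI x
  deriving DecidableEq, Fintype

def adjVI {x : ℕ} : VI x → VI x → Bool
  | .root, .mid _ => true
  | .mid i, .leaf j _ => i == j
  | _, _ => false

abbrev GVI (x : ℕ) : SimpleGraph (VI x) := mkGraph (@adjVI x)

/-- Agents: `x + 1` red agents and `x` blue agents. -/
abbrev AI (x : ℕ) := Fin (x + 1) ⊕ Fin x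

/-- The type (color) of each agent: `0` = red, `1` = blue. -/
def cI (x : ℕ) : AI x → Fin 2 := Sum.elim (fun _ => 0) (fun _ => 1)

/-!
In an equilibrium, a leaf `ℓ` below `β_i` whose color differs from its parent's has utility
`0`, so it would profitably swap with any exposed agent of its parent's color sitting anywhere
but at `β_i`. Hence colors agree along every edge avoiding `β_i`: the root and the whole subtree
of the other child (`x + 1` nodes) share one color, which also occurs at `β_i` or at `ℓ`, giving
`x + 2` agents of one color — too many. So every leaf has its parent's color, and then the `x`
blue agents fill exactly one child's subtree below a red root: only the root and that child are
exposed. Conversely, coloring `α, β₁` red, `β₂` blue and every leaf opposite to its parent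
exposes every agent.
-/

section Utility

variable {A V K : Type*} [Fintype V] [DecidableEq K] {G : SimpleGraph V} [DecidableRel G.Adj]
  {c : A → K} {σ : A ≃ V}

lemma util_eq_zero {i : A} (h : ∀ w, G.Adj (σ i) w → c (σ.symm w) ≠ c i) :
    util G c σ i = 0 := by
  rw [util, filter_false_of_mem (by simpa using h)]
  simp

lemma util_pos {i : A} (h : ∃ w, G.Adj (σ i) w ∧ c (σ.symm w) = c i) :
    0 < util G c σ i := by
  obtain ⟨w, hw, hwc⟩ := h
  apply div_pos <;> norm_cast <;> apply card_pos.2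
  exacts [⟨w, by simpa [hw] using hwc⟩, ⟨w, by simpa using hw⟩]

lemma util_lt_one {i : A} (h : ∃ w, G.Adj (σ i) w ∧ c (σ.symm w) ≠ c i) :
    util G c σ i < 1 := by
  obtain ⟨w, hw, hwc⟩ := h
  have hw' : w ∈ G.neighborFinset (σ i) := by simpa using hw
  rw [util, div_lt_one (by exact_mod_cast card_pos.2 ⟨w, hw'⟩)]
  exact_mod_cast card_lt_card (filter_ssubset.2 ⟨w, hw', hwc⟩)

lemma util_eq_one {i : A} (hne : ∃ w, G.Adj (σ i) w)
    (h : ∀ w, G.Adj (σ i) w → c (σ.symm w) = c i) : util G c σ i = 1 := by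
  obtain ⟨w, hw⟩ := hne
  rw [util, filter_true_of_mem (by simpa using h), div_self]
  exact_mod_cast (card_pos.2 ⟨w, by simpa using hw⟩).ne'

end Utility

section Swap

variable {A V : Type*} [DecidableEq A]

lemma swapA_apply_left (σ : A ≃ V) (i j : A) : swapA σ i j i = σ j := by
  simp [swapA]

lemma swapA_apply_right (σ : A ≃ V) (i j : A) : swapA σ i j j = σ i := by
  simp [swapA]

lemma swapA_symm_apply_of_ne {σ : A ≃ V} {w : V} {i j : A} (hi : w ≠ σ i) (hj : w ≠ σ j) :
    (swapA σ i j).symm w = σ.symm w := by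
  rw [swapA, Equiv.symm_trans_apply]
  exact Equiv.swap_apply_of_ne_of_ne (by rintro rfl; simp at hi) (by rintro rfl; simp at hj)

end Swap

section Equilibrium

variable {A V K : Type*} [Fintype V] [DecidableEq A] [DecidableEq K] {G : SimpleGraph V}
  [DecidableRel G.Adj] {c : A → K} {σ : A ≃ V}

/-- An agent without friends among its neighbors gains by moving next to a friend, and the
agent it displaces gains by moving into a neighborhood made only of its own friends. -/
lemma improving_of_surrounded {i j : A} (hij : c i ≠ c j) (hadj : ¬ G.Adj (σ i) (σ j))
    (hi : ∃ w, G.Adj (σ i) w) (hi' : ∀ w, G.Adj (σ i) w → c (σ.symm w) = c j)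
    (hj : ∃ z, G.Adj (σ j) z ∧ c (σ.symm z) = c i) : improving G c σ i j := by
  obtain ⟨z, hz, hzc⟩ := hj
  have hz_ne : z ≠ σ i := by rintro rfl; exact hadj hz.symm
  refine ⟨?_, ?_⟩
  · rw [util_eq_zero fun w hw => (hi' w hw).trans_ne hij.symm]
    refine util_pos ⟨z, ?_, ?_⟩
    · rwa [swapA_apply_left]
    · rwa [swapA_symm_apply_of_ne hz_ne hz.ne']
  · refine (util_lt_one ⟨z, hz, hzc.trans_ne hij⟩).trans_eq (util_eq_one ?_ ?_).symm
    · rwa [swapA_apply_right]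
    · intro w hw
      rw [swapA_apply_right] at hw
      rw [swapA_symm_apply_of_ne hw.ne' (by rintro rfl; exact hadj hw)]
      exact hi' w hw

def SwapStable {V K : Type*} (G : SimpleGraph V) (χ : V → K) : Prop :=
  ∀ ⦃u w : V⦄, χ u ≠ χ w → ¬ G.Adj u w → (∃ z, G.Adj u z) →
    (∀ z, G.Adj u z → χ z = χ w) → ∀ z, G.Adj w z → χ z ≠ χ u

lemma isEquilibrium.swapStable (h : isEquilibrium G c σ) : SwapStable G (c ∘ σ.symm) := by
  intro u w huw hadj hu hu' z hz hzu
  refine h ⟨σ.symm u, σ.symm w, improving_of_surrounded huw ?_ ?_ ?_ ⟨z, ?_, hzu⟩⟩ <;>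
    simpa using ‹_›

end Equilibrium

def IsExposedNode {V K : Type*} (G : SimpleGraph V) (χ : V → K) (v : V) : Prop :=
  ∃ w, G.Adj v w ∧ χ w ≠ χ v

section NodeColoring

variable {A V K : Type*} [Fintype A] [Fintype V] [DecidableEq K]

instance (G : SimpleGraph V) [DecidableRel G.Adj] (χ : V → K) :
    DecidablePred (IsExposedNode G χ) :=
  fun _ => inferInstanceAs (Decidable (∃ _, _))

lemma DI_eq_card_isExposedNode (G : SimpleGraph V) [DecidableRel G.Adj] (c : A → K)
    (σ : A ≃ V) : DI G c σ = #{v | IsExposedNode G (c ∘ σ.symm) v} :=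
  card_equiv σ fun i => by
    simp only [mem_filter, mem_univ, true_and]
    simp [exposed, IsExposedNode, Finset.Nonempty]

lemma card_filter_comp_symm_eq (c : A → K) (σ : A ≃ V) (k : K) :
    #{v | (c ∘ σ.symm) v = k} = #{i | c i = k} :=
  card_equiv σ.symm fun v => by simp

lemma exists_equiv_comp_symm_eq (c : A → K) (χ : V → K)
    (h : ∀ k, #{i | c i = k} = #{v | χ v = k}) : ∃ σ : A ≃ V, c ∘ σ.symm = χ := by
  let e : ∀ k, {i // c i = k} ≃ {v // χ v = k} := fun k =>
    Fintype.equivOfCardEq (by rw [Fintype.card_subtype, Fintype.card_subtype, h])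
  refine ⟨Equiv.ofFiberEquiv e, funext fun v => ?_⟩
  have hv := Equiv.ofFiberEquiv_map e ((Equiv.ofFiberEquiv e).symm v)
  rw [Equiv.apply_symm_apply] at hv
  exact hv.symm

end NodeColoring

namespace VI

variable {x : ℕ}

lemma adj_root_iff {w : VI x} : (GVI x).Adj root w ↔ ∃ i, w = mid i := by
  cases w <;> simp only [GVI, mkGraph, adjVI] <;> simp

lemma adj_mid_iff {i : Fin 2} {w : VI x} :
    (GVI x).Adj (mid i) w ↔ w = root ∨ ∃ t, w = leaf i t := by
  cases w <;> simp only [GVI, mkGraph, adjVI] <;> simp [eq_comm (a := i)]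

lemma adj_leaf_iff {i : Fin 2} {t : Fin (x - 1)} {w : VI x} :
    (GVI x).Adj (leaf i t) w ↔ w = mid i := by
  cases w <;> simp only [GVI, mkGraph, adjVI] <;> simp

def equivOption : VI x ≃ Option (Fin 2 × Option (Fin (x - 1))) where
  toFun
    | root => none
    | mid i => some (i, none)
    | leaf i t => some (i, some t)
  invFun
    | none => root
    | some (i, none) => mid i
    | some (i, some t) => leaf i t
  left_inv v := by cases v <;> rfl
  right_inv o := by rcases o with _ | ⟨i, _ | t⟩ <;> rfl

lemma sum_eq {M : Type*} [AddCommMonoid M] (f : VI x → M) :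
    ∑ v, f v = f root + ∑ i, (f (mid i) + ∑ t, f (leaf i t)) := by
  rw [← equivOption.symm.sum_comp]
  simp [Fintype.sum_option, Fintype.sum_prod_type, equivOption]

lemma card_filter (p : VI x → Prop) [DecidablePred p] :
    #{v | p v} = (if p root then 1 else 0) +
      ∑ i, ((if p (mid i) then 1 else 0) + #{t | p (leaf i t)}) := by
  simp only [Finset.card_filter, sum_eq]

end VI

open VI

section LeafColors

variable {x : ℕ} {χ : VI x → Fin 2}

/-- A leaf `ℓ` of a color other than its parent's makes every node `w ≠ mid i` of the
parent's color unexposed (otherwise `ℓ` and `w` would swap), so colors agree along every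
edge avoiding `mid i`. -/
lemma color_eq_of_adj_of_leaf_ne_mid (hχ : SwapStable (GVI x) χ) {i : Fin 2}
    {t : Fin (x - 1)} (hℓ : χ (leaf i t) ≠ χ (mid i)) {u w : VI x} (huw : (GVI x).Adj u w)
    (hu : u ≠ mid i) (hw : w ≠ mid i) : χ u = χ w := by
  have spread : ∀ {u w : VI x}, (GVI x).Adj u w → u ≠ mid i → χ u = χ (mid i) →
      χ w = χ (mid i) := by
    intro u w huw hu hua
    by_contra hwa
    refine hχ (u := leaf i t) (w := u) (hua ▸ hℓ) (by simpa [adj_leaf_iff] using hu)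
      ⟨mid i, adj_leaf_iff.2 rfl⟩ ?_ w huw (by omega)
    simp [adj_leaf_iff, hua]
  by_cases hua : χ u = χ (mid i)
  · exact hua.trans (spread huw hu hua).symm
  · by_cases hwa : χ w = χ (mid i)
    · exact absurd (spread huw.symm hw hwa) hua
    · omega

lemma color_leaf_eq_mid (hχ : SwapStable (GVI x) χ) (hcount : ∀ k, #{v | χ v = k} ≤ x + 1)
    (i : Fin 2) (t : Fin (x - 1)) : χ (leaf i t) = χ (mid i) := by
  by_contra hℓ
  obtain ⟨j, hji⟩ : ∃ j, j ≠ i := ⟨i + 1, by omega⟩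
  have hmid : χ (mid j) = χ root :=
    (color_eq_of_adj_of_leaf_ne_mid hχ hℓ (adj_root_iff.2 ⟨j, rfl⟩) (by simp)
      (by simpa using hji)).symm
  have hleaf (s : Fin (x - 1)) : χ (leaf j s) = χ root :=
    (color_eq_of_adj_of_leaf_ne_mid hχ hℓ (adj_mid_iff.2 (Or.inr ⟨s, rfl⟩))
      (by simpa using hji) (by simp)).symm.trans hmid
  -- the root, the subtree of `mid j`, and one of `mid i`, `ℓ`: `x + 2` nodes of the root's color
  have hsubtree_i : 1 ≤ (if χ (mid i) = χ root then 1 else 0) +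
      #{s | χ (leaf i s) = χ root} := by
    by_cases h : χ (mid i) = χ root
    · simp [h]
    · have hℓr : χ (leaf i t) = χ root := by omega
      exact le_add_left (card_pos.2 ⟨t, by simp [hℓr]⟩)
  have hcard := hcount (χ root)
  rw [VI.card_filter, Fintype.sum_eq_add i j hji.symm (by omega)] at hcard
  simp [hmid, hleaf] at hcard
  omega

end LeafColors

section Counting

variable {x : ℕ}

lemma card_filter_cI_zero : #{a | cI x a = 0} = x + 1 := by
  rw [Finset.card_filter, Fintype.sum_sum_type]
  simp [cI]

lemma card_filter_cI_one : #{a | cI x a = 1} = x := by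
  rw [Finset.card_filter, Fintype.sum_sum_type]
  simp [cI]

lemma card_isExposedNode_eq_two {χ : VI x → Fin 2} (hx : 2 ≤ x) (hχ : SwapStable (GVI x) χ)
    (hcount : ∀ k, #{v | χ v = k} = #{a | cI x a = k}) :
    #{v | IsExposedNode (GVI x) χ v} = 2 := by
  have h0 := (hcount 0).trans card_filter_cI_zero
  have h1 := (hcount 1).trans card_filter_cI_one
  have hleaf := color_leaf_eq_mid hχ (by intro k; fin_cases k <;> simp [h0, h1])
  rw [VI.card_filter] at h1 ⊢
  simp [hleaf, IsExposedNode, adj_root_iff, adj_mid_iff, adj_leaf_iff] at h1 ⊢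
  generalize χ root = r, χ (mid 0) = m₀, χ (mid 1) = m₁ at h1 ⊢
  fin_cases r <;> fin_cases m₀ <;> fin_cases m₁ <;> simp at h1 ⊢ <;> omega

def integratedColoring (x : ℕ) : VI x → Fin 2
  | root => 0
  | mid i => i
  | leaf i _ => i + 1

lemma card_filter_integratedColoring (hx : 2 ≤ x) (k : Fin 2) :
    #{v | integratedColoring x v = k} = #{a | cI x a = k} := by
  rw [VI.card_filter]
  fin_cases k
  · simp [integratedColoring, card_filter_cI_zero]; omega
  · simp [integratedColoring, card_filter_cI_one]; omega

lemma isExposedNode_integratedColoring (hx : 2 ≤ x) (v : VI x) :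
    IsExposedNode (GVI x) (integratedColoring x) v := by
  cases v with
  | root => exact ⟨mid 1, adj_root_iff.2 ⟨1, rfl⟩, by simp [integratedColoring]⟩
  | mid i =>
    exact ⟨leaf i ⟨0, by omega⟩, adj_mid_iff.2 (Or.inr ⟨_, rfl⟩),
      by simp [integratedColoring]⟩
  | leaf i t => exact ⟨mid i, adj_leaf_iff.2 rfl, by simp [integratedColoring]⟩

lemma card_isExposedNode_integratedColoring (hx : 2 ≤ x) :
    #{v | IsExposedNode (GVI x) (integratedColoring x) v} = 2 * x + 1 := by
  rw [VI.card_filter]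
  simp [isExposedNode_integratedColoring hx]
  omega

end Counting

/-- for every `x ≥ 2`, in the 2-swap game with `x+1` red and `x` blue
strategic agents on the tree with root `α`, two children `β₁, β₂`, and `x−1` leaves per
child, some assignment exposes all `n = 2x+1` agents, while every equilibrium
assignment has degree of integration exactly `2`. Hence the integration price of
stability of 2-swap games with only strategic agents is at least `n/2`. -/
theorem integration_pos_lower_bound (x : ℕ) (hx : 2 ≤ x) :
    (∃ σ : AI x ≃ VI x, DI (GVI x) (cI x) σ = 2 * x + 1) ∧
    (∀ σ : AI x ≃ VI x, isEquilibrium (GVI x) (cI x) σ → DI (GVI x) (cI x) σ = 2) := by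
  refine ⟨?_, fun σ hσ => ?_⟩
  · obtain ⟨σ, hσ⟩ := exists_equiv_comp_symm_eq (cI x) (integratedColoring x)
      fun k => (card_filter_integratedColoring hx k).symm
    refine ⟨σ, ?_⟩
    rw [DI_eq_card_isExposedNode, hσ, card_isExposedNode_integratedColoring hx]
  · rw [DI_eq_card_isExposedNode]
    exact card_isExposedNode_eq_two hx hσ.swapStable (card_filter_comp_symm_eq (cI x) σ)

end SwapGame
end
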